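/- Let q = 2ⁿ with n odd, and set m = 2^{(n−1)/2} (so m = √(q/2)). Then the independence number of the Erdős–Rényi polarity graph satisfies α(ER_q) ≥ m·q − q + m, i.e. α(ER_q) ≥ q^{3/2}/√2 − q + √(q/2). -/

import Mathlib

open Projectivization

/-- Two points of `PG(2,q)`, `q` even, are conjugate with respect to the pseudo polarity
if the bilinear form `p₁q₁ + p₃q₂ + p₂q₃` vanishes (this is independent of the chosen
representatives). -/
def ConjEven {F : Type} [Field F] (P Q : Projectivization F (Fin 3 → F)) : Prop :=
  P.rep 0 * Q.rep 0 + P.rep 2 * Q.rep 1 + P.rep 1 * Q.rep 2 = 0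

/-- The Erdős–Rényi polarity graph `ER_q`, `q` even: vertices are the points of `PG(2,q)`,
two distinct points being adjacent when they are conjugate. -/
def ER (F : Type) [Field F] : SimpleGraph (Projectivization F (Fin 3 → F)) where
  Adj P Q := P ≠ Q ∧ ConjEven P Q
  symm := by
    constructor
    rintro P Q ⟨h1, h2⟩
    exact ⟨h1.symm, by unfold ConjEven at *; linear_combination h2⟩
  loopless := ⟨fun P h => h.1 rfl⟩

/-! Let `Tr : F → 𝔽₂` be the absolute trace. Since `n` is odd, `Tr 1 = 1`, while `Tr (v² + v) = 0`
for all `v`. For the trace form `(a, b) ↦ Tr (a b)` on `F ≅ 𝔽₂ⁿ` we have `Tr (a²) = Tr a`, so every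
vector orthogonal to `1` is isotropic, and a greedy argument yields a totally isotropic subspace `W`
of dimension `(n - 1) / 2`. For `Y = 1 + W` all products `y y'` have trace `1`. The points `[1 : 0 : 0]`
and `[x : 1 : x² y]` with `x ≠ 0`, `y ∈ Y` then form an independent set of size `(q - 1) m + 1`:
conjugacy of `[x : 1 : x² y]` and `[x' : 1 : x'² y']` says `v² + v = y y'` for `v = x y / x'`. -/

open Module

namespace LinearMap.BilinForm

open Submodule

variable {K V : Type*} [Field K] [AddCommGroup V] [Module K V] [FiniteDimensional K V]

theorem exists_isotropic_submodule {B : LinearMap.BilinForm K V} (hB : B.IsRefl) {u : V}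
    (hu : ∀ x, B u x = 0 → B x x = 0) {j : ℕ} (hj : 2 * j + 1 ≤ finrank K V) :
    ∃ W : Submodule K V, finrank K W = j ∧ ∀ x ∈ W, ∀ y ∈ W, B x y = 0 := by
  induction j with
  | zero => exact ⟨⊥, finrank_bot K V, by simp⟩
  | succ j ih =>
    obtain ⟨W, hWj, hW⟩ := ih (by omega)
    set U := W ⊔ K ∙ u
    have hU : finrank K U ≤ j + 1 := by
      refine (finrank_add_le_finrank_add_finrank W _).trans ?_
      rw [hWj]
      gcongr
      exact (finrank_span_le_card {u}).trans (by simp)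
    obtain ⟨x, hxU, hxW⟩ : ∃ x ∈ B.orthogonal U, x ∉ W := by
      refine SetLike.not_le_iff_exists.mp fun hle => ?_
      have hperp := finrank_add_finrank_orthogonal' (B := B) U
      have hmono := Submodule.finrank_mono hle
      omega
    have hWx : ∀ w ∈ W, B w x = 0 := fun w hw => hxU w (mem_sup_left hw)
    have hxx : B x x = 0 := hu x (hxU u (mem_sup_right (mem_span_singleton_self u)))
    refine ⟨W ⊔ K ∙ x, by rw [finrank_sup_span_singleton hxW, hWj], ?_⟩
    intro y hy z hz
    obtain ⟨w, hw, _, ha, rfl⟩ := mem_sup.mp hy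
    obtain ⟨w', hw', _, hb, rfl⟩ := mem_sup.mp hz
    obtain ⟨a, rfl⟩ := mem_span_singleton.mp ha
    obtain ⟨b, rfl⟩ := mem_span_singleton.mp hb
    simp [hW w hw w' hw', hWx w hw, hB _ _ (hWx w' hw'), hxx]

end LinearMap.BilinForm

namespace FiniteField

theorem algebra_trace_pow_card {K L : Type*} [Field K] [Fintype K] [Field L] [Algebra K L]
    [Algebra.IsAlgebraic K L] (x : L) :
    Algebra.trace K L (x ^ Fintype.card K) = Algebra.trace K L x :=
  Algebra.trace_eq_of_algEquiv (frobeniusAlgEquivOfAlgebraic K L) x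

variable {F : Type*} [Field F] [Finite F] [Algebra (ZMod 2) F]

local notation "Tr" => Algebra.trace (ZMod 2) F

theorem trace_sq (x : F) : Tr (x ^ 2) = Tr x := by
  simpa [ZMod.card] using algebra_trace_pow_card (K := ZMod 2) x

theorem trace_sq_add_self (v : F) : Tr (v ^ 2 + v) = 0 := by
  rw [map_add, trace_sq, CharTwo.add_self_eq_zero]

theorem exists_ncard_eq_trace_mul_eq_one (hn : Odd (finrank (ZMod 2) F)) :
    ∃ Y : Set F, Y.ncard = 2 ^ (finrank (ZMod 2) F / 2) ∧
      ∀ y ∈ Y, ∀ y' ∈ Y, Tr (y * y') = 1 := by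
  have htr_one : Tr 1 = 1 := by
    simpa [ZMod.natCast_eq_one_iff_odd.mpr hn] using Algebra.trace_algebraMap (S := F) (1 : ZMod 2)
  obtain ⟨W, hWdim, hW⟩ := LinearMap.BilinForm.exists_isotropic_submodule
    (Algebra.traceForm_isSymm (ZMod 2) (S := F)).isRefl (u := 1) (j := finrank (ZMod 2) F / 2)
    (fun x hx => by rw [Algebra.traceForm_apply, ← pow_two, trace_sq]; simpa using hx)
    (by obtain ⟨k, hk⟩ := hn; omega)
  have htr_W : ∀ w ∈ W, Tr w = 0 := fun w hw => by
    simpa [← pow_two, trace_sq] using hW w hw w hw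
  refine ⟨(1 + ·) '' W, ?_, ?_⟩
  · rw [(add_right_injective 1).injOn.ncard_image, ← hWdim, ← Nat.card_coe_set_eq,
      SetLike.coe_sort_coe, natCard_eq_pow_finrank (K := ZMod 2), Nat.card_zmod]
  · rintro _ ⟨w, hw, rfl⟩ _ ⟨w', hw', rfl⟩
    have hww' : Tr (w * w') = 0 := hW w hw w' hw'
    rw [show (1 + w) * (1 + w') = 1 + w + w' + w * w' by ring, map_add, map_add, map_add, htr_one,
      htr_W w hw, htr_W w' hw', hww', add_zero, add_zero, add_zero]

end FiniteField

open scoped LinearAlgebra.Projectivization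

namespace ErdosRenyi

variable {F : Type} [Field F]

theorem conjEven_mk_iff {v w : Fin 3 → F} (hv : v ≠ 0) (hw : w ≠ 0) :
    ConjEven (mk F v hv) (mk F w hw) ↔ v 0 * w 0 + v 2 * w 1 + v 1 * w 2 = 0 := by
  obtain ⟨a, ha⟩ := exists_smul_eq_mk_rep F v hv
  obtain ⟨b, hb⟩ := exists_smul_eq_mk_rep F w hw
  have hab : (a * b : F) ≠ 0 := mul_ne_zero a.ne_zero b.ne_zero
  unfold ConjEven
  rw [← ha, ← hb]
  simp only [Pi.smul_apply, Units.smul_def, smul_eq_mul]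
  constructor
  · intro h
    exact (mul_eq_zero.mp (by linear_combination h)).resolve_left hab
  · intro h
    linear_combination (a * b : F) * h

def point100 : ℙ F (Fin 3 → F) := mk F ![1, 0, 0] (fun h => by simpa using congrFun h 0)

def point (x y : F) : ℙ F (Fin 3 → F) :=
  mk F ![x, 1, x * x * y] (fun h => by simpa using congrFun h 1)

theorem conjEven_point100_point_iff {x y : F} : ConjEven point100 (point x y) ↔ x = 0 := by
  simp [point100, point, conjEven_mk_iff]

theorem point100_ne_point (x y : F) : point100 ≠ point x y := by
  intro h
  obtain ⟨a, ha⟩ := (mk_eq_mk_iff F _ _ _ _).mp h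
  simpa [Units.smul_def] using congrFun ha 1

theorem point_injOn : Set.InjOn (fun p : F × F => point p.1 p.2) {p | p.1 ≠ 0} := by
  rintro ⟨x, y⟩ hx ⟨x', y'⟩ - h
  obtain ⟨a, ha⟩ := (mk_eq_mk_iff F _ _ _ _).mp h
  have h1 : (a : F) = 1 := by simpa [Units.smul_def] using congrFun ha 1
  have h0 : x' = x := by simpa [Units.smul_def, h1] using congrFun ha 0
  have h2 : x' * x' * y' = x * x * y := by simpa [Units.smul_def, h1] using congrFun ha 2
  subst h0
  exact Prod.ext rfl (mul_left_cancel₀ (mul_ne_zero hx hx) h2).symm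

theorem not_conjEven_point [CharP F 2] {x x' y y' : F} (hx' : x' ≠ 0)
    (hyy' : y * y' ∉ Set.range fun v : F => v ^ 2 + v) :
    ¬ ConjEven (point x y) (point x' y') := by
  rw [point, point, conjEven_mk_iff]
  simp only [Matrix.cons_val_zero, Matrix.cons_val_one, Matrix.cons_val_two, Matrix.head_cons,
    Matrix.tail_cons]
  intro h
  refine hyy' ⟨x * y / x', ?_⟩
  field_simp
  linear_combination y * h - y * x' ^ 2 * y' * CharTwo.two_eq_zero (R := F)

def indepSetOf (Y : Set F) : Set (ℙ F (Fin 3 → F)) :=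
  insert point100 ((fun p : F × F => point p.1 p.2) '' ({0}ᶜ ×ˢ Y))

theorem isIndepSet_indepSetOf [CharP F 2] {Y : Set F}
    (hY : ∀ y ∈ Y, ∀ y' ∈ Y, y * y' ∉ Set.range fun v : F => v ^ 2 + v) :
    (ER F).IsIndepSet (indepSetOf Y) := by
  rintro P (rfl | ⟨⟨x, y⟩, ⟨hx, hy⟩, rfl⟩) Q (rfl | ⟨⟨x', y'⟩, ⟨hx', hy'⟩, rfl⟩) hne hadj
  · exact hne rfl
  · exact hx' (conjEven_point100_point_iff.mp hadj.2)
  · exact hx (conjEven_point100_point_iff.mp hadj.symm.2)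
  · exact not_conjEven_point hx' (hY y hy y' hy') hadj.2

theorem ncard_indepSetOf [Fintype F] (Y : Set F) :
    (indepSetOf Y).ncard = (Fintype.card F - 1) * Y.ncard + 1 := by
  have hnot : point100 ∉ (fun p : F × F => point p.1 p.2) '' ({0}ᶜ ×ˢ Y) := by
    rintro ⟨p, -, hp⟩
    exact point100_ne_point _ _ hp.symm
  rw [indepSetOf, Set.ncard_insert_of_notMem hnot,
    (point_injOn.mono fun p hp => hp.1).ncard_image, Set.ncard_prod, Set.ncard_compl,
    Set.ncard_singleton, Nat.card_eq_fintype_card]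

end ErdosRenyi

/-- If `q = 2ⁿ` with `n` odd and `m = 2^{(n-1)/2} = √(q/2)`, then
`α(ER_q) ≥ m·q - q + m = q^{3/2}/√2 - q + √(q/2)`. -/
theorem alpha_ER_even_nonsquare
    (n q m : ℕ) (hn : Odd n) (hq : q = 2 ^ n) (hm : m = 2 ^ ((n - 1) / 2))
    (F : Type) [Field F] [Fintype F] (hF : Fintype.card F = q) :
    ∃ S : Set (Projectivization F (Fin 3 → F)),
      (∀ P ∈ S, ∀ Q ∈ S, ¬ (ER F).Adj P Q) ∧
      m * q - q + m ≤ S.ncard := by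
  have : Fact (Nat.Prime 2) := ⟨Nat.prime_two⟩
  have : CharP F 2 := charP_of_card_eq_prime_pow (hF.trans hq)
  let : Algebra (ZMod 2) F := ZMod.algebra F 2
  have hdim : finrank (ZMod 2) F = n := by
    have := card_eq_pow_finrank (K := ZMod 2) (V := F)
    rw [ZMod.card, hF, hq] at this
    exact (Nat.pow_right_injective le_rfl this).symm
  obtain ⟨Y, hYcard, hY⟩ := FiniteField.exists_ncard_eq_trace_mul_eq_one (hdim ▸ hn)
  refine ⟨ErdosRenyi.indepSetOf Y, fun P hP Q hQ hadj =>
    ErdosRenyi.isIndepSet_indepSetOf ?_ hP hQ hadj.ne hadj, ?_⟩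
  · rintro y hy y' hy' ⟨v, hv⟩
    simpa [hv, hY y hy y' hy'] using FiniteField.trace_sq_add_self v
  · have hn2 : n % 2 = 1 := Nat.odd_iff.mp hn
    have hm1 : 1 ≤ m := hm ▸ Nat.one_le_two_pow
    have h2m : 2 * m ≤ q := by
      rw [hm, hq, ← pow_succ']
      exact Nat.pow_le_pow_right two_pos (by omega)
    have hqm : q ≤ m * q := Nat.le_mul_of_pos_left q hm1
    rw [ErdosRenyi.ncard_indepSetOf, hF, hYcard, hdim, show n / 2 = (n - 1) / 2 by omega, ← hm,
      Nat.sub_one_mul, mul_comm q m]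
    omega
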